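/- The vector field F₁(x,y,z) = (−y², xy, 0) on ℝ³ admits the positive-definite first integral I(x,y,z) = x² + y² + z²; consequently all its integral curves are bounded and F₁ is a complete vector field. -/

import Mathlib

/-!
`I = x² + y² + z²` is a first integral since `2(x·(−y²) + y·xy) = 0`, so every integral curve
defined on all of `ℝ` stays on the sphere of radius `√(I v)` through its initial point. Global
integral curves exist explicitly: with `a = √(x₀² + y₀²)`, let `(D, N)` be the image of `(a, x₀)`
under the hyperbolic rotation by `a t`. Then `D² − N² = a² − x₀² = y₀²` and `D > 0` because
`|x₀| ≤ a`, and `t ↦ (a N / D, a y₀ / D, z₀)` solves the system for all `t`.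
-/

/-- The geodesic field `F₁` on `aff(ℝ) ⊕ ℝ` (`λ = 0`): `(−y², xy, 0)`. -/
def F1aff (v : Fin 3 → ℝ) : Fin 3 → ℝ := ![-(v 1) ^ 2, v 0 * v 1, 0]

open Real

theorem mul_cosh_sub_mul_sinh_pos {a x : ℝ} (ha : 0 < a) (hx : |x| ≤ a) (s : ℝ) :
    0 < a * cosh s - x * sinh s := by
  have hsinh : |sinh s| < cosh s :=
    abs_lt.2 ⟨by linarith [sinh_lt_cosh (-s), sinh_neg s, cosh_neg s], sinh_lt_cosh s⟩
  rw [sub_pos]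
  calc x * sinh s ≤ |x| * |sinh s| := by rw [← abs_mul]; exact le_abs_self _
    _ ≤ a * |sinh s| := by gcongr
    _ < a * cosh s := by gcongr

namespace F1aff

def firstIntegral (v : Fin 3 → ℝ) : ℝ := v 0 ^ 2 + v 1 ^ 2 + v 2 ^ 2

theorem hasDerivAt_firstIntegral_comp {γ : ℝ → Fin 3 → ℝ} {t : ℝ}
    (hγ : HasDerivAt γ (F1aff (γ t)) t) : HasDerivAt (fun u => firstIntegral (γ u)) 0 t := by
  rw [hasDerivAt_pi] at hγ
  have hx := hγ 0
  have hy := hγ 1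
  have hz := hγ 2
  simp only [F1aff, Matrix.cons_val_zero, Matrix.cons_val_one, Matrix.cons_val_two,
    Matrix.tail_cons, Matrix.head_cons] at hx hy hz
  exact (((hx.fun_pow 2).add (hy.fun_pow 2)).add (hz.fun_pow 2)).congr_deriv (by ring)

theorem firstIntegral_comp_eq {γ : ℝ → Fin 3 → ℝ} (hγ : ∀ t, HasDerivAt γ (F1aff (γ t)) t)
    (t : ℝ) : firstIntegral (γ t) = firstIntegral (γ 0) :=
  is_const_of_deriv_eq_zero (fun u => (hasDerivAt_firstIntegral_comp (hγ u)).differentiableAt)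
    (fun u => (hasDerivAt_firstIntegral_comp (hγ u)).deriv) t 0

theorem norm_le_sqrt_firstIntegral (v : Fin 3 → ℝ) : ‖v‖ ≤ √(firstIntegral v) := by
  rw [pi_norm_le_iff_of_nonneg (sqrt_nonneg _)]
  intro i
  rw [norm_eq_abs]
  apply abs_le_sqrt
  fin_cases i <;> simp only [firstIntegral, Fin.zero_eta, Fin.mk_one, Fin.reduceFinMk] <;>
    nlinarith [sq_nonneg (v 0), sq_nonneg (v 1), sq_nonneg (v 2)]

theorem eq_zero_of_apply_one_eq_zero {v : Fin 3 → ℝ} (hv : v 1 = 0) : F1aff v = 0 := by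
  ext i
  fin_cases i <;> simp [F1aff, hv]

noncomputable def boostCurve (a x y z t : ℝ) : Fin 3 → ℝ :=
  ![a * (x * cosh (a * t) - a * sinh (a * t)) / (a * cosh (a * t) - x * sinh (a * t)),
    a * y / (a * cosh (a * t) - x * sinh (a * t)), z]

theorem boostCurve_zero {a : ℝ} (ha : a ≠ 0) (x y z : ℝ) :
    boostCurve a x y z 0 = ![x, y, z] := by
  ext i
  fin_cases i <;> simp [boostCurve, ha]

theorem hasDerivAt_boostCurve {a x y : ℝ} (hxy : a ^ 2 = x ^ 2 + y ^ 2) (z t : ℝ)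
    (hD : a * cosh (a * t) - x * sinh (a * t) ≠ 0) :
    HasDerivAt (boostCurve a x y z) (F1aff (boostCurve a x y z t)) t := by
  have hat : HasDerivAt (fun t => a * t) a t := by simpa using (hasDerivAt_id t).const_mul a
  have hcosh := (hasDerivAt_cosh (a * t)).comp t hat
  have hsinh := (hasDerivAt_sinh (a * t)).comp t hat
  have hD' : HasDerivAt (fun t => a * cosh (a * t) - x * sinh (a * t))
      (-a * (x * cosh (a * t) - a * sinh (a * t))) t :=
    ((hcosh.const_mul a).sub (hsinh.const_mul x)).congr_deriv (by ring)
  have hN' : HasDerivAt (fun t => x * cosh (a * t) - a * sinh (a * t))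
      (-a * (a * cosh (a * t) - x * sinh (a * t))) t :=
    ((hcosh.const_mul x).sub (hsinh.const_mul a)).congr_deriv (by ring)
  have hpyth := cosh_sq_sub_sinh_sq (a * t)
  rw [hasDerivAt_pi]
  intro i
  fin_cases i
  · refine ((hN'.const_mul a).div hD' hD).congr_deriv ?_
    simp only [F1aff, boostCurve, Fin.zero_eta, Matrix.cons_val_zero, Matrix.cons_val_one]
    field_simp
    linear_combination (-a ^ 2 * (a ^ 2 - x ^ 2)) * hpyth - a ^ 2 * hxy
  · refine ((hasDerivAt_const t (a * y)).div hD' hD).congr_deriv ?_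
    simp only [F1aff, boostCurve, Fin.mk_one, Matrix.cons_val_zero, Matrix.cons_val_one]
    field_simp
    ring
  · exact (hasDerivAt_const t z).congr_deriv (by simp [F1aff])

theorem exists_integralCurve (v : Fin 3 → ℝ) :
    ∃ γ : ℝ → Fin 3 → ℝ, γ 0 = v ∧ ∀ t, HasDerivAt γ (F1aff (γ t)) t := by
  by_cases hv : v 1 = 0
  · exact ⟨fun _ => v, rfl, fun t => by
      simpa [eq_zero_of_apply_one_eq_zero hv] using hasDerivAt_const t v⟩
  set a := √(v 0 ^ 2 + v 1 ^ 2)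
  have hxy : a ^ 2 = v 0 ^ 2 + v 1 ^ 2 := sq_sqrt (by positivity)
  have ha : 0 < a := sqrt_pos.2 (by positivity)
  have hx : |v 0| ≤ a := abs_le_sqrt (by nlinarith)
  refine ⟨boostCurve a (v 0) (v 1) (v 2), ?_, fun t =>
    hasDerivAt_boostCurve hxy _ t (mul_cosh_sub_mul_sinh_pos ha hx _).ne'⟩
  rw [boostCurve_zero ha.ne']
  ext i
  fin_cases i <;> rfl

end F1aff

/-- `I = x² + y² + z²` is a (positive-definite) first integral of `F₁`;
consequently all integral curves are bounded and `F₁` is complete. -/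
theorem stmt_6 :
    (∀ (γ : ℝ → Fin 3 → ℝ) (t : ℝ), HasDerivAt γ (F1aff (γ t)) t →
        HasDerivAt (fun u => (γ u 0) ^ 2 + (γ u 1) ^ 2 + (γ u 2) ^ 2) 0 t) ∧
    (∀ v : Fin 3 → ℝ, ∃ γ : ℝ → Fin 3 → ℝ, γ 0 = v ∧
        (∀ t, HasDerivAt γ (F1aff (γ t)) t) ∧ ∃ C, ∀ t, ‖γ t‖ ≤ C) := by
  refine ⟨fun γ t hγ => F1aff.hasDerivAt_firstIntegral_comp hγ, fun v => ?_⟩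
  obtain ⟨γ, hγ0, hγ⟩ := F1aff.exists_integralCurve v
  refine ⟨γ, hγ0, hγ, √(F1aff.firstIntegral v), fun t => ?_⟩
  calc ‖γ t‖ ≤ √(F1aff.firstIntegral (γ t)) := F1aff.norm_le_sqrt_firstIntegral _
    _ = √(F1aff.firstIntegral v) := by rw [F1aff.firstIntegral_comp_eq hγ, hγ0]
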